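/- There is an exact sequence of right A-modules 0 → P(e) → P(s) → P(e) → S_e → 0, where the map P(e) → P(s) is left multiplication by a, the map P(s) → P(e) is left multiplication by b, and P(e) → S_e is the canonical projection onto the simple top. In particular the simple module S_e has projective dimension 2. -/

import Mathlib

open CategoryTheory MulOpposite Polynomial

namespace Sl2Q

/-- Generators of the path algebra of the quiver `e ⇄ s`:
`0 ↦ 1_e`, `1 ↦ 1_s`, `2 ↦ a : e → s`, `3 ↦ b : s → e`. -/
abbrev FA : Type := FreeAlgebra ℂ (Fin 4)

/-- The defining relations of the path algebra `ℂQ/(ba)`: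
the trivial paths are orthogonal idempotents summing to `1`, the arrows are
compatible with sources and targets, and the path `e → s → e` (first `a`, then `b`,
written `b * a`) is zero. -/
inductive PathRel : FA → FA → Prop
  | idem_e : PathRel (FreeAlgebra.ι ℂ 0 * FreeAlgebra.ι ℂ 0) (FreeAlgebra.ι ℂ 0)
  | idem_s : PathRel (FreeAlgebra.ι ℂ 1 * FreeAlgebra.ι ℂ 1) (FreeAlgebra.ι ℂ 1)
  | orth_es : PathRel (FreeAlgebra.ι ℂ 0 * FreeAlgebra.ι ℂ 1) 0
  | orth_se : PathRel (FreeAlgebra.ι ℂ 1 * FreeAlgebra.ι ℂ 0) 0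
  | sum_one : PathRel (FreeAlgebra.ι ℂ 0 + FreeAlgebra.ι ℂ 1) 1
  | a_tgt : PathRel (FreeAlgebra.ι ℂ 1 * FreeAlgebra.ι ℂ 2) (FreeAlgebra.ι ℂ 2)
  | a_src : PathRel (FreeAlgebra.ι ℂ 2 * FreeAlgebra.ι ℂ 0) (FreeAlgebra.ι ℂ 2)
  | b_tgt : PathRel (FreeAlgebra.ι ℂ 0 * FreeAlgebra.ι ℂ 3) (FreeAlgebra.ι ℂ 3)
  | b_src : PathRel (FreeAlgebra.ι ℂ 3 * FreeAlgebra.ι ℂ 1) (FreeAlgebra.ι ℂ 3)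
  | ba : PathRel (FreeAlgebra.ι ℂ 3 * FreeAlgebra.ι ℂ 2) 0

/-- The path algebra `A = ℂ[e ⇄ s]/(ba)`. -/
def A : Type := RingQuot PathRel

noncomputable instance : Ring A := inferInstanceAs (Ring (RingQuot PathRel))
noncomputable instance : Algebra ℂ A := inferInstanceAs (Algebra ℂ (RingQuot PathRel))

noncomputable def toA : FreeAlgebra ℂ (Fin 4) →ₐ[ℂ] A := RingQuot.mkAlgHom ℂ PathRel

noncomputable def gen (i : Fin 4) : A := toA (FreeAlgebra.ι ℂ i)

/-- the idempotent `1_e` -/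
noncomputable def oneE : A := gen 0
/-- the idempotent `1_s` -/
noncomputable def oneS : A := gen 1
/-- the arrow `a : e → s` -/
noncomputable def arrA : A := gen 2
/-- the arrow `b : s → e` -/
noncomputable def arrB : A := gen 3
/-- the loop `ab` at `s` (first `b`, then `a`) -/
noncomputable def ab : A := arrA * arrB

lemma rel_eq {x y : FA} (h : PathRel x y) : toA x = toA y :=
  RingQuot.mkAlgHom_rel ℂ h

lemma oneS_mul_arrA : oneS * arrA = arrA := by
  rw [oneS, arrA, gen, gen, ← map_mul]
  exact rel_eq PathRel.a_tgt

lemma oneE_mul_arrB : oneE * arrB = arrB := by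
  rw [oneE, arrB, gen, gen, ← map_mul]
  exact rel_eq PathRel.b_tgt

lemma oneS_mul_ab : oneS * ab = ab := by
  rw [ab, ← mul_assoc, oneS_mul_arrA]

/-- `A` is a right module over itself, i.e. a module over `Aᵐᵒᵖ`;
scalars `ℂ` act compatibly. -/
instance : IsScalarTower ℂ Aᵐᵒᵖ A :=
  ⟨fun c r x => by
    rw [MulOpposite.smul_eq_mul_unop, MulOpposite.smul_eq_mul_unop, MulOpposite.unop_smul,
      mul_smul_comm]⟩

instance : SMulCommClass Aᵐᵒᵖ ℂ A :=
  ⟨fun r c x => by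
    rw [MulOpposite.smul_eq_mul_unop, MulOpposite.smul_eq_mul_unop, smul_mul_assoc]⟩

/-- `P u = u·A`, the right ideal generated by `u`, as a right `A`-module
(i.e. a module over `Aᵐᵒᵖ`). -/
noncomputable def P (u : A) : Submodule Aᵐᵒᵖ A := Submodule.span Aᵐᵒᵖ {u}

lemma mem_P {u z : A} (h : u * z = z) : z ∈ P u :=
  Submodule.mem_span_singleton.mpr ⟨op z, by rw [op_smul_eq_mul, h]⟩

instance (p : Submodule Aᵐᵒᵖ A) : SMulCommClass Aᵐᵒᵖ ℂ ↥p :=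
  ⟨fun r c x => Subtype.ext (smul_comm r c (x : A))⟩

instance (p : Submodule Aᵐᵒᵖ A) : IsScalarTower ℂ Aᵐᵒᵖ ↥p :=
  ⟨fun c r x => Subtype.ext (smul_assoc c r (x : A))⟩

/-- Left multiplication by `z` as a homomorphism of right `A`-modules `P u ⟶ P v`,
where `v * z = z` (i.e. `z ∈ v·A`). -/
noncomputable def lmul (u : A) {v z : A} (h : v * z = z) : ↥(P u) →ₗ[Aᵐᵒᵖ] ↥(P v) where
  toFun x := ⟨z * (x : A), mem_P (by rw [← mul_assoc, h])⟩
  map_add' x y := Subtype.ext (by simp [mul_add])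
  map_smul' r x := Subtype.ext (by
    simp [MulOpposite.smul_eq_mul_unop, mul_assoc])

end Sl2Q

namespace Sl2Q

/-- The algebra map `A → ℂ` corresponding to the vertex `e`
(sending `1_e ↦ 1` and `1_s, a, b ↦ 0`). -/
noncomputable def εe : A →ₐ[ℂ] ℂ :=
  RingQuot.liftAlgHom ℂ
    ⟨FreeAlgebra.lift ℂ (fun i => if i = 0 then (1 : ℂ) else 0), by
      rintro x y h
      induction h <;>
        simp [FreeAlgebra.lift_ι_apply]⟩

/-- The one-dimensional simple right `A`-module concentrated at the vertex `e`:
the underlying type is `ℂ`, and `A` acts (on the right) through `εe`,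
so that `1_e` acts as the identity and `1_s`, `a`, `b` act as zero. -/
def Se : Type := ℂ

noncomputable instance : AddCommGroup Se := inferInstanceAs (AddCommGroup ℂ)
noncomputable instance : Module ℂ Se := inferInstanceAs (Module ℂ ℂ)

/-- the (right) action of `A` on `Se` through `εe` -/
noncomputable instance : Module Aᵐᵒᵖ Se :=
  Module.compHom ℂ ((εe.toRingHom).fromOpposite (fun _ _ => mul_comm _ _))

lemma Se.smul_def (r : Aᵐᵒᵖ) (c : Se) : r • c = εe (unop r) • c := rfl

end Sl2Q

namespace Sl2Q

/-- The canonical projection `P(e) ↠ S_e` onto the simple top, induced by `εe`. -/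
noncomputable def πe : ↥(P oneE) →ₗ[Aᵐᵒᵖ] Se where
  toFun x := εe (x : A)
  map_add' x y := by simp [map_add]; rfl
  map_smul' r x := by
    show εe ((x : A) * (unop r)) = εe (unop r) * εe (x : A)
    rw [map_mul, mul_comm]

end Sl2Q

/-!
`A` has the ℂ-basis `1_e, 1_s, a, b, ab`, so `P(e) = span {1_e, b}` and
`P(s) = span {1_s, a, ab}`, and exactness is a computation in these bases (linear
independence is detected in a three-dimensional representation). Both `P(e)` and `P(s)` are
direct summands of `A`, hence projective.

If `S_e` had a projective resolution of length one, it would have projective dimension `< 2`,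
so the kernel `b·A` of `P(e) ↠ S_e` would be projective. Then `P(s) ↠ b·A` splits, and
`x ↦ a x` would have a retraction `r : P(s) → P(e)`. But `1_e = r(a) = r(1_s)·a ∈ P(e)·a = 0`.
-/

universe u v

lemma Submodule.mem_span_op_singleton {R : Type*} [Semiring R] {u z : R} :
    z ∈ Submodule.span Rᵐᵒᵖ {u} ↔ ∃ r, u * r = z :=
  Submodule.mem_span_singleton.trans
    ⟨fun ⟨r, h⟩ => ⟨r.unop, h⟩, fun ⟨r, h⟩ => ⟨op r, h⟩⟩

instance Module.Projective.op_self (R : Type*) [Ring R] : Module.Projective Rᵐᵒᵖ R :=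
  Module.Projective.of_equiv (MulOpposite.opLinearEquiv Rᵐᵒᵖ (M := R)).symm

theorem Module.Projective.span_op_singleton {R : Type*} [Ring R] {u : R}
    (hu : IsIdempotentElem u) : Module.Projective Rᵐᵒᵖ (Submodule.span Rᵐᵒᵖ {u}) := by
  let retraction : R →ₗ[Rᵐᵒᵖ] Submodule.span Rᵐᵒᵖ {u} :=
    { toFun x := ⟨u * x, Submodule.mem_span_op_singleton.mpr ⟨x, rfl⟩⟩
      map_add' x y := Subtype.ext (mul_add u x y)
      map_smul' r x := Subtype.ext (mul_assoc u x r.unop).symm }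
  refine Module.Projective.of_split (Submodule.span Rᵐᵒᵖ {u}).subtype retraction ?_
  ext ⟨z, hz⟩
  obtain ⟨r, rfl⟩ := Submodule.mem_span_op_singleton.mp hz
  simp [retraction, ← mul_assoc, hu.eq]

theorem Function.Exact.exists_leftInverse_of_projective {R M N Q : Type*} [Ring R]
    [AddCommGroup M] [AddCommGroup N] [AddCommGroup Q] [Module R M] [Module R N] [Module R Q]
    [Module.Projective R Q] {f : M →ₗ[R] N} {g : N →ₗ[R] Q} (h : Function.Exact f g)
    (hf : Function.Injective f) (hg : Function.Surjective g) :
    ∃ l : N →ₗ[R] M, l ∘ₗ f = LinearMap.id :=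
  ((h.split_tfae hf hg).out 0 1).mp (Module.projective_lifting_property g LinearMap.id hg)

theorem ModuleCat.hasProjectiveDimensionLT_two_of_exact {R : Type u} [Ring R]
    {Q₁ Q₀ X : ModuleCat.{v} R} [Projective Q₁] [Projective Q₀] (f : Q₁ ⟶ Q₀) (g : Q₀ ⟶ X)
    (hf : Function.Injective f) (hg : Function.Surjective g)
    (hfg : LinearMap.range f.hom = LinearMap.ker g.hom) :
    HasProjectiveDimensionLT X 2 :=
  let S := ShortComplex.mk f g (ModuleCat.hom_ext (LinearMap.range_le_ker_iff.mp hfg.le))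
  (ModuleCat.shortComplex_shortExact S (LinearMap.exact_iff.mpr hfg.symm) hf hg
    ).hasProjectiveDimensionLT_X₃ 1 inferInstance inferInstance

namespace Sl2Q

lemma gen_mul_gen_eq {i j : Fin 4} {y : FA}
    (h : PathRel (FreeAlgebra.ι ℂ i * FreeAlgebra.ι ℂ j) y) : gen i * gen j = toA y :=
  (map_mul toA _ _).symm.trans (rel_eq h)

lemma oneE_mul_oneE : oneE * oneE = oneE := gen_mul_gen_eq .idem_e
lemma oneS_mul_oneS : oneS * oneS = oneS := gen_mul_gen_eq .idem_s
lemma oneE_mul_oneS : oneE * oneS = 0 := (gen_mul_gen_eq .orth_es).trans (map_zero toA)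
lemma oneS_mul_oneE : oneS * oneE = 0 := (gen_mul_gen_eq .orth_se).trans (map_zero toA)
lemma arrA_mul_oneE : arrA * oneE = arrA := gen_mul_gen_eq .a_src
lemma arrB_mul_oneS : arrB * oneS = arrB := gen_mul_gen_eq .b_src
lemma arrB_mul_arrA : arrB * arrA = 0 := (gen_mul_gen_eq .ba).trans (map_zero toA)

lemma oneE_add_oneS : oneE + oneS = 1 :=
  (map_add toA _ _).symm.trans ((rel_eq .sum_one).trans (map_one toA))

lemma oneE_mul_arrA : oneE * arrA = 0 := by
  rw [← oneS_mul_arrA, ← mul_assoc, oneE_mul_oneS, zero_mul]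
lemma arrA_mul_oneS : arrA * oneS = 0 := by
  rw [← arrA_mul_oneE, mul_assoc, oneE_mul_oneS, mul_zero]
lemma oneS_mul_arrB : oneS * arrB = 0 := by
  rw [← oneE_mul_arrB, ← mul_assoc, oneS_mul_oneE, zero_mul]
lemma arrB_mul_oneE : arrB * oneE = 0 := by
  rw [← arrB_mul_oneS, mul_assoc, oneS_mul_oneE, mul_zero]
lemma arrA_mul_arrA : arrA * arrA = 0 := by
  nth_rw 1 [← arrA_mul_oneE]; rw [mul_assoc, oneE_mul_arrA, mul_zero]
lemma arrB_mul_arrB : arrB * arrB = 0 := by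
  nth_rw 1 [← arrB_mul_oneS]; rw [mul_assoc, oneS_mul_arrB, mul_zero]
lemma arrA_mul_arrB : arrA * arrB = ab := rfl
lemma oneE_mul_ab : oneE * ab = 0 := by rw [ab, ← mul_assoc, oneE_mul_arrA, zero_mul]
lemma arrA_mul_ab : arrA * ab = 0 := by rw [ab, ← mul_assoc, arrA_mul_arrA, zero_mul]
lemma arrB_mul_ab : arrB * ab = 0 := by rw [ab, ← mul_assoc, arrB_mul_arrA, zero_mul]
lemma ab_mul_oneE : ab * oneE = 0 := by rw [ab, mul_assoc, arrB_mul_oneE, mul_zero]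
lemma ab_mul_oneS : ab * oneS = ab := by rw [ab, mul_assoc, arrB_mul_oneS]
lemma ab_mul_arrA : ab * arrA = 0 := by rw [ab, mul_assoc, arrB_mul_arrA, mul_zero]
lemma ab_mul_arrB : ab * arrB = 0 := by rw [ab, mul_assoc, arrB_mul_arrB, mul_zero]
lemma ab_mul_ab : ab * ab = 0 := (mul_assoc arrA arrB ab).trans (by rw [arrB_mul_ab, mul_zero])

lemma adjoin_range_gen : Algebra.adjoin ℂ (Set.range gen) = ⊤ := by
  rw [show Set.range gen = toA '' Set.range (FreeAlgebra.ι ℂ) from Set.range_comp _ _,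
    ← AlgHom.map_adjoin, FreeAlgebra.adjoin_range_ι, Algebra.map_top, AlgHom.range_eq_top]
  exact RingQuot.mkAlgHom_surjective ℂ PathRel

def pathBasis : Set A := {oneE, oneS, arrA, arrB, ab}

lemma span_pathBasis : Submodule.span ℂ pathBasis = ⊤ := by
  set S := Submodule.span ℂ pathBasis
  have mul_le : S * S ≤ S := by
    rw [Submodule.span_mul_span, Submodule.span_le]
    rintro _ ⟨x, hx, y, hy, rfl⟩
    simp only [pathBasis, Set.mem_insert_iff, Set.mem_singleton_iff] at hx hy
    rcases hx with rfl | rfl | rfl | rfl | rfl <;> rcases hy with rfl | rfl | rfl | rfl | rfl <;>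
      simp only [oneE_mul_oneE, oneE_mul_oneS, oneE_mul_arrA, oneE_mul_arrB, oneE_mul_ab,
        oneS_mul_oneE, oneS_mul_oneS, oneS_mul_arrA, oneS_mul_arrB, oneS_mul_ab,
        arrA_mul_oneE, arrA_mul_oneS, arrA_mul_arrA, arrA_mul_arrB, arrA_mul_ab,
        arrB_mul_oneE, arrB_mul_oneS, arrB_mul_arrA, arrB_mul_arrB, arrB_mul_ab,
        ab_mul_oneE, ab_mul_oneS, ab_mul_arrA, ab_mul_arrB, ab_mul_ab] <;>
      first | exact zero_mem S | exact Submodule.subset_span (by simp [pathBasis])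
  have one_mem : (1 : A) ∈ S := oneE_add_oneS ▸
    add_mem (Submodule.subset_span (by simp [pathBasis]))
      (Submodule.subset_span (by simp [pathBasis]))
  let B := S.toSubalgebra one_mem fun _ _ hx hy => mul_le (Submodule.mul_mem_mul hx hy)
  have adjoin_le : Algebra.adjoin ℂ (Set.range gen) ≤ B := Algebra.adjoin_le <| by
    rintro _ ⟨i, rfl⟩
    fin_cases i <;> exact Submodule.subset_span (by simp [pathBasis, oneE, oneS, arrA, arrB])
  rw [adjoin_range_gen] at adjoin_le
  exact eq_top_iff.mpr fun x _ => adjoin_le trivial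

lemma mem_P_iff_mem_span {u z : A} :
    z ∈ P u ↔ z ∈ Submodule.span ℂ (LinearMap.mulLeft ℂ u '' pathBasis) := by
  rw [Submodule.span_image, span_pathBasis, Submodule.map_top, LinearMap.mem_range, P,
    Submodule.mem_span_op_singleton]
  rfl

lemma mem_Pe_iff {z : A} : z ∈ P oneE ↔ ∃ α β : ℂ, α • oneE + β • arrB = z := by
  rw [mem_P_iff_mem_span, ← Submodule.mem_span_pair]
  simp only [LinearMap.mulLeft_apply, pathBasis, Set.image_insert_eq, Set.image_singleton,
    oneE_mul_oneE, oneE_mul_oneS, oneE_mul_arrA, oneE_mul_arrB, oneE_mul_ab, Set.mem_insert_iff,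
    Set.mem_singleton_iff, or_true, Set.insert_eq_of_mem]
  simp only [Set.pair_comm _ (0 : A), Set.insert_comm _ (0 : A), Submodule.span_insert_zero]

lemma mem_Ps_iff {z : A} : z ∈ P oneS ↔ ∃ α β γ : ℂ, α • oneS + β • arrA + γ • ab = z := by
  rw [mem_P_iff_mem_span, ← Submodule.mem_span_triple]
  simp only [LinearMap.mulLeft_apply, pathBasis, Set.image_insert_eq, Set.image_singleton,
    oneS_mul_oneE, oneS_mul_oneS, oneS_mul_arrA, oneS_mul_arrB, oneS_mul_ab, Set.mem_insert_iff,
    Set.mem_singleton_iff, true_or, or_true, Set.insert_eq_of_mem]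
  simp only [Set.insert_comm _ (0 : A), Submodule.span_insert_zero]

lemma mul_arrA_eq_zero_of_mem_Pe {z : A} (hz : z ∈ P oneE) : z * arrA = 0 := by
  obtain ⟨α, β, rfl⟩ := mem_Pe_iff.mp hz
  simp [add_mul, oneE_mul_arrA, arrB_mul_arrA]

noncomputable def genMatrix : Fin 4 → Matrix (Fin 3) (Fin 3) ℂ :=
  ![!![0, 0, 0; 0, 1, 0; 0, 0, 0], !![1, 0, 0; 0, 0, 0; 0, 0, 1],
    !![0, 0, 0; 0, 0, 0; 0, 1, 0], !![0, 0, 0; 1, 0, 0; 0, 0, 0]]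

/-- The representation on `ℂ³` with basis vectors `0, 2` at the vertex `s` and `1` at `e`, in
which `a`, `b` and `ab` act by distinct matrix units. -/
noncomputable def toMatrix : A →ₐ[ℂ] Matrix (Fin 3) (Fin 3) ℂ :=
  RingQuot.liftAlgHom ℂ ⟨FreeAlgebra.lift ℂ genMatrix, fun _ _ h => by
    induction h <;> simp [genMatrix, Matrix.one_fin_three, ← Matrix.ext_iff,
      Fin.forall_fin_succ, eq_comm (a := (0 : Fin 3 → ℂ))]⟩

lemma toMatrix_gen (i : Fin 4) : toMatrix (gen i) = genMatrix i :=
  (RingQuot.liftAlgHom_mkAlgHom_apply _ _ _ _).trans (FreeAlgebra.lift_ι_apply _ _)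

lemma smul_arrA_add_smul_ab_eq_zero_iff {α β : ℂ} :
    α • arrA + β • ab = 0 ↔ α = 0 ∧ β = 0 := by
  refine ⟨fun h => ?_, by rintro ⟨rfl, rfl⟩; simp⟩
  simpa [ab, arrA, arrB, toMatrix_gen, genMatrix, Matrix.mul_apply, Fin.sum_univ_three] using
    congrArg (fun x => (toMatrix x 2 1, toMatrix x 2 0)) h

lemma arrB_ne_zero : arrB ≠ 0 := fun h => by
  simpa [arrB, toMatrix_gen, genMatrix] using congrArg (fun x => toMatrix x 1 0) h

lemma εe_gen (i : Fin 4) : εe (gen i) = if i = 0 then 1 else 0 :=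
  (RingQuot.liftAlgHom_mkAlgHom_apply _ _ _ _).trans (FreeAlgebra.lift_ι_apply _ _)

lemma oneE_ne_zero : oneE ≠ 0 := fun h => by
  simpa [oneE, εe_gen] using congrArg εe h

@[simp] lemma coe_lmul (u : A) {v z : A} (h : v * z = z) (x : P u) :
    (lmul u h x : A) = z * x := rfl

lemma injective_lmul_arrA : Function.Injective (lmul oneE oneS_mul_arrA) := by
  rw [← LinearMap.ker_eq_bot, LinearMap.ker_eq_bot']
  rintro ⟨_, hx⟩ h
  obtain ⟨α, β, rfl⟩ := mem_Pe_iff.mp hx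
  have : α • arrA + β • ab = 0 := by
    simpa [mul_add, arrA_mul_oneE, arrA_mul_arrB] using congrArg Subtype.val h
  obtain ⟨rfl, rfl⟩ := smul_arrA_add_smul_ab_eq_zero_iff.mp this
  simp

lemma range_lmul_arrA_eq_ker_lmul_arrB :
    LinearMap.range (lmul oneE oneS_mul_arrA) = LinearMap.ker (lmul oneS oneE_mul_arrB) := by
  refine le_antisymm (LinearMap.range_le_ker_iff.mpr ?_) fun ⟨x, hx⟩ h => ?_
  · ext y
    simp [← mul_assoc, arrB_mul_arrA]
  obtain ⟨α, β, γ, rfl⟩ := mem_Ps_iff.mp hx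
  have hα : α • arrB = 0 := by
    simpa [mul_add, arrB_mul_oneS, arrB_mul_arrA, arrB_mul_ab] using congrArg Subtype.val h
  obtain rfl : α = 0 := (smul_eq_zero.mp hα).resolve_right arrB_ne_zero
  refine ⟨⟨β • oneE + γ • arrB, mem_Pe_iff.mpr ⟨β, γ, rfl⟩⟩, Subtype.ext ?_⟩
  simp [mul_add, arrA_mul_oneE, arrA_mul_arrB]

lemma range_lmul_arrB_eq_ker_πe :
    LinearMap.range (lmul oneS oneE_mul_arrB) = LinearMap.ker πe := by
  refine le_antisymm (LinearMap.range_le_ker_iff.mpr ?_) fun ⟨x, hx⟩ h => ?_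
  · ext y
    show εe (arrB * y) = 0
    simp [arrB, εe_gen]
  obtain ⟨α, β, rfl⟩ := mem_Pe_iff.mp hx
  have hα : εe (α • oneE + β • arrB) = 0 := h
  obtain rfl : α = 0 := by simpa [oneE, arrB, εe_gen] using hα
  exact ⟨⟨β • oneS, mem_Ps_iff.mpr ⟨β, 0, 0, by simp⟩⟩, Subtype.ext (by simp [arrB_mul_oneS])⟩

lemma surjective_πe : Function.Surjective πe := fun (c : ℂ) =>
  ⟨⟨c • oneE, mem_Pe_iff.mpr ⟨c, 0, by simp⟩⟩, show εe (c • oneE) = c by simp [oneE, εe_gen]⟩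

lemma not_exists_leftInverse_lmul_arrA :
    ¬ ∃ r : P oneS →ₗ[Aᵐᵒᵖ] P oneE, r ∘ₗ lmul oneE oneS_mul_arrA = LinearMap.id := by
  rintro ⟨r, hr⟩
  let x : P oneE := ⟨oneE, mem_P oneE_mul_oneE⟩
  have hx : lmul oneE oneS_mul_arrA x = op arrA • ⟨oneS, mem_P oneS_mul_oneS⟩ :=
    Subtype.ext (arrA_mul_oneE.trans oneS_mul_arrA.symm)
  have hrx := congrArg (fun f => (f x : A)) hr
  simp only [LinearMap.comp_apply, hx, map_smul, LinearMap.id_apply] at hrx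
  exact oneE_ne_zero (hrx.symm.trans (mul_arrA_eq_zero_of_mem_Pe (r _).2))

lemma not_hasProjectiveDimensionLT_Se_two :
    ¬ HasProjectiveDimensionLT (ModuleCat.of Aᵐᵒᵖ Se) 2 := by
  intro hSe
  have : Module.Projective Aᵐᵒᵖ (P oneE) := .span_op_singleton oneE_mul_oneE
  have : Projective (ModuleCat.of Aᵐᵒᵖ (P oneE)) :=
    ModuleCat.projective_of_categoryTheory_projective _
  have : HasProjectiveDimensionLT (ModuleCat.of Aᵐᵒᵖ (LinearMap.ker πe)) 1 :=
    (LinearMap.shortExact_shortComplexKer surjective_πe).hasProjectiveDimensionLT_X₁ 1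
      inferInstance hSe
  have := ModuleCat.projective_of_module_projective (ModuleCat.of Aᵐᵒᵖ (LinearMap.ker πe))
  have : Module.Projective Aᵐᵒᵖ (LinearMap.range (lmul oneS oneE_mul_arrB)) :=
    .of_equiv (LinearEquiv.ofEq _ _ range_lmul_arrB_eq_ker_πe.symm)
  have hexact :
      Function.Exact (lmul oneE oneS_mul_arrA) (lmul oneS oneE_mul_arrB).rangeRestrict := by
    rw [LinearMap.exact_iff, LinearMap.ker_rangeRestrict, range_lmul_arrA_eq_ker_lmul_arrB]
  exact not_exists_leftInverse_lmul_arrA <| hexact.exists_leftInverse_of_projective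
    (Q := LinearMap.range (lmul oneS oneE_mul_arrB)) injective_lmul_arrA
    (LinearMap.surjective_rangeRestrict _)

open CategoryTheory in
/-- There is an exact sequence of right `A`-modules
`0 → P(e) → P(s) → P(e) → S_e → 0`, where the first map is left multiplication by
`a`, the second is left multiplication by `b`, and the third is the canonical
projection onto the simple top.  In particular, together with the projectivity of
`P(e)` and `P(s)` and the non-existence of a projective resolution of length `≤ 1`,
the simple module `S_e` has projective dimension `2`. -/
theorem exact_sequence_Pe_Ps_Pe_Se_and_projdim_two :
    Function.Injective (lmul oneE oneS_mul_arrA) ∧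
    LinearMap.range (lmul oneE oneS_mul_arrA) = LinearMap.ker (lmul oneS oneE_mul_arrB) ∧
    LinearMap.range (lmul oneS oneE_mul_arrB) = LinearMap.ker πe ∧
    Function.Surjective πe ∧
    -- `S_e` has projective dimension `2`:
    Module.Projective Aᵐᵒᵖ ↥(P oneE) ∧ Module.Projective Aᵐᵒᵖ ↥(P oneS) ∧
    ¬ ∃ (Q₁ Q₀ : ModuleCat.{0} Aᵐᵒᵖ) (f : Q₁ ⟶ Q₀) (g : Q₀ ⟶ ModuleCat.of Aᵐᵒᵖ Se),
        Projective Q₁ ∧ Projective Q₀ ∧ Function.Injective f ∧ Function.Surjective g ∧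
        LinearMap.range f.hom = LinearMap.ker g.hom := by
  refine ⟨injective_lmul_arrA, range_lmul_arrA_eq_ker_lmul_arrB, range_lmul_arrB_eq_ker_πe,
    surjective_πe, .span_op_singleton oneE_mul_oneE, .span_op_singleton oneS_mul_oneS, ?_⟩
  rintro ⟨Q₁, Q₀, f, g, _, _, hf, hg, hfg⟩
  exact not_hasProjectiveDimensionLT_Se_two
    (ModuleCat.hasProjectiveDimensionLT_two_of_exact f g hf hg hfg)

end Sl2Q
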